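/- Let f : I → ℝ with I ⊆ [0, ∞), f three times differentiable on the interior I° with f''' integrable on [a,b], where a, b ∈ I° with a < b. Suppose |f'''|^q is s-convex in the second sense on [a,b] for some fixed s ∈ (0,1] and q > 1 with 1/p + 1/q = 1. Then |∫_a^b f(x) dx − ((b−a)/6)·[f(a) + 4·f((a+b)/2) + f(b)]| ≤ ((b−a)^4/48)·(1/2)^{1/p}·(Γ(2p+1)·Γ(p+1)/Γ(3p+2))^{1/p} · { [ |f'''(a)|^q/(2^{s+1}(s+1)) + ((2^{s+1}−1)/(2^{s+1}(s+1)))·|f'''(b)|^q ]^{1/q} + [ ((2^{s+1}−1)/(2^{s+1}(s+1)))·|f'''(a)|^q + |f'''(b)|^q/(2^{s+1}(s+1)) ]^{1/q} }. -/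

import Mathlib

/-!
Integrating by parts three times against the Peano kernel `K t = (t - a)² (m - t) / 6`,
`m = (a + b) / 2`, writes the Simpson error as `∫ₐᵐ K f''' - ∫ₐᵐ K (f''' ∘ (a + b - ·))`:
the reflection `t ↦ a + b - t` folds the right half of the interval onto the left one.
On `[a, m]` Hölder's inequality separates `‖K‖_p`, a Beta integral, from `‖f'''‖_q`, and
`s`-convexity bounds `|f'''(t)|^q` by
`((b - t) / (b - a))^s |f'''(a)|^q + ((t - a) / (b - a))^s |f'''(b)|^q`, whose integral over
`[a, m]` produces the weights `(2^(s+1) - 1) / (2^(s+1) (s+1))` and `1 / (2^(s+1) (s+1))`;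
the reflection swaps them.
-/

open MeasureTheory Real Set

/-- `g` is `s`-convex in the second sense on the set `A`: for all `x, y ∈ A` and `t ∈ [0,1]`,
`g(tx + (1-t)y) ≤ t^s g(x) + (1-t)^s g(y)`. -/
def SConvexSecondSenseOn (s : ℝ) (A : Set ℝ) (g : ℝ → ℝ) : Prop :=
  ∀ x ∈ A, ∀ y ∈ A, ∀ t ∈ Set.Icc (0 : ℝ) 1,
    g (t * x + (1 - t) * y) ≤ t ^ s * g x + (1 - t) ^ s * g y

open intervalIntegral

theorem integral_div_rpow {h s α β : ℝ} (hh : h ≠ 0) (hs : -1 < s) :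
    ∫ u in α..β, (u / h) ^ s = h * ((β / h) ^ (s + 1) - (α / h) ^ (s + 1)) / (s + 1) := by
  rw [integral_comp_div (fun u => u ^ s) hh, integral_rpow (Or.inl hs), smul_eq_mul,
    mul_div_assoc]

theorem integral_sub_rpow_mul_sub_rpow {α β u v : ℝ} (hαβ : α < β) (hu : 0 < u) (hv : 0 < v) :
    ∫ x in α..β, (x - α) ^ (u - 1) * (β - x) ^ (v - 1) =
      (β - α) ^ (u + v - 1) * (Gamma u * Gamma v / Gamma (u + v)) := by
  obtain ⟨c, rfl⟩ : ∃ c, β = α + c := ⟨β - α, by ring⟩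
  have hc : 0 < c := by linarith
  have hshift : ∫ x in α..α + c, (x - α) ^ (u - 1) * (α + c - x) ^ (v - 1) =
      ∫ y in (0 : ℝ)..c, y ^ (u - 1) * (c - y) ^ (v - 1) := by
    have h := integral_comp_sub_right (fun y => y ^ (u - 1) * (c - y) ^ (v - 1)) α
      (a := α) (b := α + c)
    rw [sub_self, add_sub_cancel_left] at h
    rw [← h]
    congr 1 with x
    ring_nf
  have hcomplex : ((∫ y in (0 : ℝ)..c, y ^ (u - 1) * (c - y) ^ (v - 1) : ℝ) : ℂ) =
      ∫ y in (0 : ℝ)..c, (y : ℂ) ^ ((u : ℂ) - 1) * ((c : ℂ) - y) ^ ((v : ℂ) - 1) := by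
    rw [← intervalIntegral.integral_ofReal]
    refine integral_congr fun y hy => ?_
    rw [uIcc_of_le hc.le] at hy
    push_cast [Complex.ofReal_cpow hy.1, Complex.ofReal_cpow (sub_nonneg.2 hy.2)]
    rfl
  rw [hshift]
  apply Complex.ofReal_injective
  rw [hcomplex, Complex.betaIntegral_scaled _ _ hc,
    Complex.betaIntegral_eq_Gamma_mul_div _ _ (by simpa using hu) (by simpa using hv)]
  push_cast [add_sub_cancel_left, Complex.ofReal_cpow hc.le, ← Complex.Gamma_ofReal]
  rfl

theorem abs_intervalIntegral_mul_le_Lp_mul_Lq {f g : ℝ → ℝ} {α β p q : ℝ} (hαβ : α ≤ β)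
    (hpq : p.HolderConjugate q)
    (hf : AEStronglyMeasurable f (volume.restrict (Ioc α β)))
    (hg : AEStronglyMeasurable g (volume.restrict (Ioc α β)))
    (hfp : IntervalIntegrable (fun x => |f x| ^ p) volume α β)
    (hgq : IntervalIntegrable (fun x => |g x| ^ q) volume α β) :
    |∫ x in α..β, f x * g x| ≤
      (∫ x in α..β, |f x| ^ p) ^ (1 / p) * (∫ x in α..β, |g x| ^ q) ^ (1 / q) := by
  have hmemLp {h : ℝ → ℝ} {r : ℝ} (hr : 0 < r)
      (hm : AEStronglyMeasurable h (volume.restrict (Ioc α β)))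
      (hi : IntervalIntegrable (fun x => |h x| ^ r) volume α β) :
      MemLp h (ENNReal.ofReal r) (volume.restrict (Ioc α β)) := by
    rw [← integrable_norm_rpow_iff hm (by simpa using hr) ENNReal.ofReal_ne_top,
      ENNReal.toReal_ofReal hr.le]
    exact (intervalIntegrable_iff_integrableOn_Ioc_of_le hαβ).1 hi
  calc |∫ x in α..β, f x * g x| ≤ ∫ x in α..β, |f x| * |g x| := by
        simpa only [abs_mul] using
          intervalIntegral.abs_integral_le_integral_abs (f := fun x => f x * g x) hαβ
    _ ≤ _ := by
        simpa only [integral_of_le hαβ, Real.norm_eq_abs] using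
          integral_mul_norm_le_Lp_mul_Lq hpq (hmemLp hpq.pos hf hfp) (hmemLp hpq.symm.pos hg hgq)

theorem integral_mul_eq_of_hasDerivAt_three {f f₁ f₂ f₃ K₀ K₁ K₂ : ℝ → ℝ} {α β : ℝ}
    (hαβ : α ≤ β) (hf : ∀ t ∈ Icc α β, HasDerivAt f (f₁ t) t)
    (hf₁ : ∀ t ∈ Icc α β, HasDerivAt f₁ (f₂ t) t) (hf₂ : ∀ t ∈ Icc α β, HasDerivAt f₂ (f₃ t) t)
    (hK₀ : ∀ t ∈ Icc α β, HasDerivAt K₀ (K₁ t) t) (hK₁ : ∀ t ∈ Icc α β, HasDerivAt K₁ (K₂ t) t)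
    (hK₂ : ∀ t ∈ Icc α β, HasDerivAt K₂ (-1) t)
    (hint : IntervalIntegrable (fun t => K₀ t * f₃ t) volume α β) :
    ∫ t in α..β, K₀ t * f₃ t = (∫ t in α..β, f t) +
      (K₀ β * f₂ β - K₁ β * f₁ β + K₂ β * f β) - (K₀ α * f₂ α - K₁ α * f₁ α + K₂ α * f α) := by
  rw [← uIcc_of_le hαβ] at hf hf₁ hf₂ hK₀ hK₁ hK₂
  have hfint : IntervalIntegrable f volume α β :=
    ContinuousOn.intervalIntegrable fun t ht => (hf t ht).continuousAt.continuousWithinAt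
  have hprim : ∀ t ∈ uIcc α β, HasDerivAt (fun t => K₀ t * f₂ t - K₁ t * f₁ t + K₂ t * f t)
      (K₀ t * f₃ t - f t) t := fun t ht =>
    ((((hK₀ t ht).mul (hf₂ t ht)).sub ((hK₁ t ht).mul (hf₁ t ht))).add
      ((hK₂ t ht).mul (hf t ht))).congr_deriv (by ring)
  have h := integral_eq_sub_of_hasDerivAt hprim (hint.sub hfint)
  rw [intervalIntegral.integral_sub hint hfint] at h
  linarith

namespace SConvexSecondSenseOn

variable {s a b : ℝ} {g : ℝ → ℝ}

theorem le_of_mem_Icc (hg : SConvexSecondSenseOn s (Icc a b) g) (hab : a < b) {t : ℝ}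
    (ht : t ∈ Icc a b) :
    g t ≤ ((b - t) / (b - a)) ^ s * g a + ((t - a) / (b - a)) ^ s * g b := by
  have hba : 0 < b - a := sub_pos.2 hab
  have hw : (b - t) / (b - a) ∈ Icc (0 : ℝ) 1 :=
    ⟨div_nonneg (by linarith [ht.2]) hba.le, (div_le_one hba).2 (by linarith [ht.1])⟩
  have h := hg a (left_mem_Icc.2 hab.le) b (right_mem_Icc.2 hab.le) _ hw
  rwa [show (b - t) / (b - a) * a + (1 - (b - t) / (b - a)) * b = t by field_simp; ring,
    show 1 - (b - t) / (b - a) = (t - a) / (b - a) by field_simp; ring] at h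

theorem comp_reflect (hg : SConvexSecondSenseOn s (Icc a b) g) :
    SConvexSecondSenseOn s (Icc a b) fun x => g (a + b - x) := by
  intro x hx y hy t ht
  have h := hg (a + b - x) ⟨by linarith [hx.2], by linarith [hx.1]⟩
    (a + b - y) ⟨by linarith [hy.2], by linarith [hy.1]⟩ t ht
  rwa [show t * (a + b - x) + (1 - t) * (a + b - y) = a + b - (t * x + (1 - t) * y) by ring] at h

theorem integrableOn_Icc (hg : SConvexSecondSenseOn s (Icc a b) g) (hab : a < b) (hs : 0 ≤ s)
    (hm : AEStronglyMeasurable g (volume.restrict (Icc a b)))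
    (hg0 : ∀ x ∈ Icc a b, 0 ≤ g x) : IntegrableOn g (Icc a b) := by
  have hcont : Continuous fun t => ((b - t) / (b - a)) ^ s * g a + ((t - a) / (b - a)) ^ s * g b :=
    by fun_prop (disch := exact fun _ => Or.inr hs)
  refine Integrable.mono' hcont.integrableOn_Icc hm ?_
  refine (ae_restrict_iff' measurableSet_Icc).2 (ae_of_all _ fun t ht => ?_)
  rw [Real.norm_of_nonneg (hg0 t ht)]
  exact hg.le_of_mem_Icc hab ht

theorem integral_left_half_le (hg : SConvexSecondSenseOn s (Icc a b) g) (hab : a < b)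
    (hs : 0 ≤ s) (hint : IntervalIntegrable g volume a ((a + b) / 2)) :
    ∫ t in a..(a + b) / 2, g t ≤
      (b - a) * (((2 : ℝ) ^ (s + 1) - 1) / ((2 : ℝ) ^ (s + 1) * (s + 1)) * g a +
        g b / ((2 : ℝ) ^ (s + 1) * (s + 1))) := by
  have hba : b - a ≠ 0 := (sub_pos.2 hab).ne'
  have hw₁ : Continuous fun t => ((b - t) / (b - a)) ^ s * g a := by
    fun_prop (disch := exact fun _ => Or.inr hs)
  have hw₂ : Continuous fun t => ((t - a) / (b - a)) ^ s * g b := by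
    fun_prop (disch := exact fun _ => Or.inr hs)
  calc ∫ t in a..(a + b) / 2, g t
      ≤ ∫ t in a..(a + b) / 2,
          (((b - t) / (b - a)) ^ s * g a + ((t - a) / (b - a)) ^ s * g b) :=
        integral_mono_on (by linarith) hint ((hw₁.add hw₂).intervalIntegrable _ _)
          fun t ht => hg.le_of_mem_Icc hab ⟨ht.1, by linarith [ht.2]⟩
    _ = (∫ t in a..(a + b) / 2, ((b - t) / (b - a)) ^ s) * g a +
          (∫ t in a..(a + b) / 2, ((t - a) / (b - a)) ^ s) * g b := by
        rw [intervalIntegral.integral_add (hw₁.intervalIntegrable _ _) (hw₂.intervalIntegrable _ _),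
          intervalIntegral.integral_mul_const, intervalIntegral.integral_mul_const]
    _ = _ := by
        rw [integral_comp_sub_left (fun u => (u / (b - a)) ^ s),
          integral_comp_sub_right (fun u => (u / (b - a)) ^ s), integral_div_rpow hba (by linarith),
          integral_div_rpow hba (by linarith), div_self hba, sub_self, zero_div,
          show (b - (a + b) / 2) / (b - a) = 2⁻¹ by field_simp; ring,
          show ((a + b) / 2 - a) / (b - a) = 2⁻¹ by field_simp; ring,
          one_rpow, zero_rpow (by linarith), inv_rpow zero_le_two]
        field_simp
        ring

end SConvexSecondSenseOn

/-- The Peano kernel of Simpson's rule on `[a, (a + b) / 2]`; on `[(a + b) / 2, b]` it is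
`t ↦ -simpsonKernel a b (a + b - t)`. -/
noncomputable def simpsonKernel (a b t : ℝ) : ℝ := (t - a) ^ 2 * ((a + b) / 2 - t) / 6

theorem integral_simpsonKernel_mul_eq {f f₁ f₂ f₃ : ℝ → ℝ} {a b : ℝ} (hab : a ≤ b)
    (hf : ∀ t ∈ Icc a ((a + b) / 2), HasDerivAt f (f₁ t) t)
    (hf₁ : ∀ t ∈ Icc a ((a + b) / 2), HasDerivAt f₁ (f₂ t) t)
    (hf₂ : ∀ t ∈ Icc a ((a + b) / 2), HasDerivAt f₂ (f₃ t) t)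
    (hf₃ : IntervalIntegrable f₃ volume a ((a + b) / 2)) :
    ∫ t in a..(a + b) / 2, simpsonKernel a b t * f₃ t =
      (∫ t in a..(a + b) / 2, f t) + (b - a) ^ 2 / 24 * f₁ ((a + b) / 2) -
        (b - a) / 3 * f ((a + b) / 2) - (b - a) / 6 * f a := by
  set m := (a + b) / 2 with hm
  set K₁ : ℝ → ℝ := fun t => (2 * (t - a) * (m - t) - (t - a) ^ 2) / 6
  set K₂ : ℝ → ℝ := fun t => (m - t - 2 * (t - a)) / 3
  have hK₀ (t : ℝ) : HasDerivAt (simpsonKernel a b) (K₁ t) t :=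
    (((((hasDerivAt_id' t).sub_const a).pow 2).mul ((hasDerivAt_id' t).const_sub m)).div_const
      6).congr_deriv (by simp only [K₁, Pi.pow_apply]; ring)
  have hK₁ (t : ℝ) : HasDerivAt K₁ (K₂ t) t :=
    ((((((hasDerivAt_id' t).sub_const a).const_mul 2).mul ((hasDerivAt_id' t).const_sub m)).sub
      (((hasDerivAt_id' t).sub_const a).pow 2)).div_const 6).congr_deriv (by simp only [K₂]; ring)
  have hK₂ (t : ℝ) : HasDerivAt K₂ (-1) t :=
    ((((hasDerivAt_id' t).const_sub m).sub
      (((hasDerivAt_id' t).sub_const a).const_mul 2)).div_const 3).congr_deriv (by ring)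
  have hK : Continuous (simpsonKernel a b) := by unfold simpsonKernel; fun_prop
  rw [integral_mul_eq_of_hasDerivAt_three (by linarith) hf hf₁ hf₂ (fun t _ => hK₀ t)
    (fun t _ => hK₁ t) (fun t _ => hK₂ t) (hf₃.continuousOn_mul hK.continuousOn)]
  simp only [simpsonKernel, K₁, K₂, sub_self, hm]
  ring

theorem simpson_error_eq {f f₁ f₂ f₃ : ℝ → ℝ} {a b : ℝ} (hab : a ≤ b)
    (hf : ∀ t ∈ Icc a b, HasDerivAt f (f₁ t) t) (hf₁ : ∀ t ∈ Icc a b, HasDerivAt f₁ (f₂ t) t)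
    (hf₂ : ∀ t ∈ Icc a b, HasDerivAt f₂ (f₃ t) t) (hf₃ : IntegrableOn f₃ (Icc a b)) :
    (∫ x in a..b, f x) - (b - a) / 6 * (f a + 4 * f ((a + b) / 2) + f b) =
      (∫ t in a..(a + b) / 2, simpsonKernel a b t * f₃ t) -
        ∫ t in a..(a + b) / 2, simpsonKernel a b t * f₃ (a + b - t) := by
  have ham : a ≤ (a + b) / 2 := by linarith
  have hmb : (a + b) / 2 ≤ b := by linarith
  have hmid : a + b - (a + b) / 2 = (a + b) / 2 := by ring
  have hL : Icc a ((a + b) / 2) ⊆ Icc a b := Icc_subset_Icc_right hmb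
  have hR : Icc ((a + b) / 2) b ⊆ Icc a b := Icc_subset_Icc_left ham
  have hrefl_mem (t : ℝ) (ht : t ∈ Icc a ((a + b) / 2)) : a + b - t ∈ Icc a b :=
    ⟨by linarith [ht.2], by linarith [ht.1]⟩
  have hint {g : ℝ → ℝ} (hg : IntegrableOn g (Icc a b)) {α β : ℝ} (hαβ : α ≤ β)
      (hsub : Icc α β ⊆ Icc a b) : IntervalIntegrable g volume α β :=
    (intervalIntegrable_iff_integrableOn_Icc_of_le hαβ).2 (hg.mono_set hsub)
  have hfi : IntegrableOn f (Icc a b) :=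
    ContinuousOn.integrableOn_Icc fun t ht => (hf t ht).continuousAt.continuousWithinAt
  have hf₃R : IntervalIntegrable (fun t => -f₃ (a + b - t)) volume a ((a + b) / 2) := by
    simpa only [add_sub_cancel_right, hmid, Pi.neg_def] using
      ((hint hf₃ hmb hR).comp_sub_left (a + b)).neg.symm
  have hrefl_deriv (t : ℝ) : HasDerivAt (fun t => a + b - t) (-1) t :=
    (hasDerivAt_id' t).const_sub _
  have hleft := integral_simpsonKernel_mul_eq hab (fun t ht => hf t (hL ht))
    (fun t ht => hf₁ t (hL ht)) (fun t ht => hf₂ t (hL ht)) (hint hf₃ ham hL)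
  -- the right half is the left-half identity for `f (a + b - ·)`
  have hright := integral_simpsonKernel_mul_eq (f := fun t => f (a + b - t))
    (f₁ := fun t => -f₁ (a + b - t)) (f₂ := fun t => f₂ (a + b - t))
    (f₃ := fun t => -f₃ (a + b - t)) hab
    (fun t ht => ((hf _ (hrefl_mem t ht)).comp t (hrefl_deriv t)).congr_deriv (by ring))
    (fun t ht => ((hf₁ _ (hrefl_mem t ht)).comp t (hrefl_deriv t)).neg.congr_deriv (by ring))
    (fun t ht => ((hf₂ _ (hrefl_mem t ht)).comp t (hrefl_deriv t)).congr_deriv (by ring)) hf₃R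
  have hsplit := integral_add_adjacent_intervals (hint hfi ham hL) (hint hfi hmb hR)
  have hcomp := integral_comp_sub_left f (a + b) (a := a) (b := (a + b) / 2)
  simp only [mul_neg, intervalIntegral.integral_neg, add_sub_cancel_left, hmid] at hright hcomp
  linear_combination -hsplit - hleft - hright - hcomp

theorem integral_abs_simpsonKernel_rpow {a b p : ℝ} (hab : a < b) (hp : 0 < p) :
    ∫ t in a..(a + b) / 2, |simpsonKernel a b t| ^ p =
      (1 / 6) ^ p * ((b - a) / 2) ^ (3 * p + 1) *
        (Gamma (2 * p + 1) * Gamma (p + 1) / Gamma (3 * p + 2)) := by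
  have hpow : ∀ t ∈ uIcc a ((a + b) / 2), |simpsonKernel a b t| ^ p =
      (1 / 6) ^ p * ((t - a) ^ (2 * p + 1 - 1) * ((a + b) / 2 - t) ^ (p + 1 - 1)) := by
    intro t ht
    rw [uIcc_of_le (by linarith)] at ht
    have hta : 0 ≤ t - a := sub_nonneg.2 ht.1
    have hbt : 0 ≤ (a + b) / 2 - t := sub_nonneg.2 ht.2
    rw [simpsonKernel, abs_of_nonneg (by positivity), add_sub_cancel_right, add_sub_cancel_right,
      mul_div_assoc, mul_rpow (by positivity) (by positivity), div_eq_mul_one_div,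
      mul_rpow hbt (by norm_num), rpow_mul hta, ← rpow_natCast]
    push_cast
    ring
  rw [integral_congr hpow, intervalIntegral.integral_const_mul,
    integral_sub_rpow_mul_sub_rpow (by linarith) (by linarith) (by linarith),
    show (a + b) / 2 - a = (b - a) / 2 by ring, show 2 * p + 1 + (p + 1) - 1 = 3 * p + 1 by ring,
    show 2 * p + 1 + (p + 1) = 3 * p + 2 by ring, mul_assoc]

theorem simpson_constant_eq {p q h G X : ℝ} (hpq : p.HolderConjugate q) (hh : 0 < h)
    (hG : 0 ≤ G) (hX : 0 ≤ X) :
    ((1 / 6) ^ p * (h / 2) ^ (3 * p + 1) * G) ^ (1 / p) * (h * X) ^ (1 / q) =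
      h ^ 4 / 48 * (1 / 2) ^ (1 / p) * G ^ (1 / p) * X ^ (1 / q) := by
  have hexp : (3 * p + 1) * (1 / p) = 3 + 1 / p := by field_simp [hpq.ne_zero]
  have hsplit :
      (h / 2) ^ ((3 * p + 1) * (1 / p)) = (h / 2) ^ 3 * (h ^ (1 / p) * (1 / 2) ^ (1 / p)) := by
    rw [hexp, rpow_add (by positivity), ← mul_rpow hh.le (by norm_num), ← div_eq_mul_one_div]
    norm_cast
  have hsum : h ^ (1 / p) * h ^ (1 / q) = h := by
    rw [← rpow_add hh, hpq.one_div_add_one_div, div_one, rpow_one]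
  rw [mul_rpow (by positivity) hG, mul_rpow (by positivity) (by positivity),
    ← rpow_mul (by norm_num), ← rpow_mul (by positivity), mul_one_div_cancel hpq.ne_zero, rpow_one,
    hsplit, mul_rpow hh.le hX]
  linear_combination (1 / 6 * (h / 2) ^ 3 * (1 / 2) ^ (1 / p) * G ^ (1 / p) * X ^ (1 / q)) * hsum

theorem abs_integral_simpsonKernel_mul_le {g : ℝ → ℝ} {a b s p q : ℝ} (hab : a < b)
    (hs : 0 ≤ s) (hpq : p.HolderConjugate q) (hg : Measurable g)
    (hconv : SConvexSecondSenseOn s (Icc a b) fun x => |g x| ^ q) :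
    |∫ t in a..(a + b) / 2, simpsonKernel a b t * g t| ≤
      (b - a) ^ 4 / 48 * ((1 : ℝ) / 2) ^ (1 / p) *
        (Gamma (2 * p + 1) * Gamma (p + 1) / Gamma (3 * p + 2)) ^ (1 / p) *
        (((2 : ℝ) ^ (s + 1) - 1) / ((2 : ℝ) ^ (s + 1) * (s + 1)) * |g a| ^ q +
          |g b| ^ q / ((2 : ℝ) ^ (s + 1) * (s + 1))) ^ (1 / q) := by
  have ham : a ≤ (a + b) / 2 := by linarith
  have hK : Continuous (simpsonKernel a b) := by unfold simpsonKernel; fun_prop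
  have hgq : IntervalIntegrable (fun x => |g x| ^ q) volume a ((a + b) / 2) :=
    (intervalIntegrable_iff_integrableOn_Icc_of_le ham).2 <|
      (hconv.integrableOn_Icc hab hs (hg.abs.pow_const q).aestronglyMeasurable
        fun x _ => by positivity).mono_set
        (Icc_subset_Icc_right (by linarith))
  have hKp : Continuous fun t => |simpsonKernel a b t| ^ p :=
    hK.abs.rpow_const fun _ => Or.inr hpq.nonneg
  have hp := hpq.pos
  have hq := hpq.symm.pos
  have hG : 0 ≤ Gamma (2 * p + 1) * Gamma (p + 1) / Gamma (3 * p + 2) := by positivity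
  have hW : 0 ≤ ((2 : ℝ) ^ (s + 1) - 1) / ((2 : ℝ) ^ (s + 1) * (s + 1)) * |g a| ^ q +
      |g b| ^ q / ((2 : ℝ) ^ (s + 1) * (s + 1)) := by
    have : 1 ≤ (2 : ℝ) ^ (s + 1) := one_le_rpow (by norm_num) (by linarith)
    have : 0 ≤ ((2 : ℝ) ^ (s + 1) - 1) / ((2 : ℝ) ^ (s + 1) * (s + 1)) :=
      div_nonneg (by linarith) (by positivity)
    positivity
  calc |∫ t in a..(a + b) / 2, simpsonKernel a b t * g t|
      ≤ (∫ t in a..(a + b) / 2, |simpsonKernel a b t| ^ p) ^ (1 / p) *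
          (∫ t in a..(a + b) / 2, |g t| ^ q) ^ (1 / q) :=
        abs_intervalIntegral_mul_le_Lp_mul_Lq ham hpq hK.aestronglyMeasurable
          hg.aestronglyMeasurable (hKp.intervalIntegrable _ _) hgq
    _ ≤ ((1 / 6) ^ p * ((b - a) / 2) ^ (3 * p + 1) *
          (Gamma (2 * p + 1) * Gamma (p + 1) / Gamma (3 * p + 2))) ^ (1 / p) *
          ((b - a) * (((2 : ℝ) ^ (s + 1) - 1) / ((2 : ℝ) ^ (s + 1) * (s + 1)) * |g a| ^ q +
            |g b| ^ q / ((2 : ℝ) ^ (s + 1) * (s + 1)))) ^ (1 / q) := by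
        rw [integral_abs_simpsonKernel_rpow hab hp]
        gcongr
        · exact intervalIntegral.integral_nonneg ham fun t _ => by positivity
        · exact hconv.integral_left_half_le hab hs hgq
    _ = _ := simpson_constant_eq hpq (by linarith) hG hW

theorem simpson_sconvex_holder_general (I : Set ℝ) (hI : I.OrdConnected) (f : ℝ → ℝ) (a b s p q : ℝ)
    (ha : a ∈ interior I) (hb : b ∈ interior I) (hab : a < b)
    (hd1 : ∀ x ∈ interior I, DifferentiableAt ℝ f x)
    (hd2 : ∀ x ∈ interior I, DifferentiableAt ℝ (deriv f) x)
    (hd3 : ∀ x ∈ interior I, DifferentiableAt ℝ (deriv (deriv f)) x)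
    (hint : IntegrableOn (deriv (deriv (deriv f))) (Set.Icc a b))
    (hs : s ∈ Set.Ioc (0 : ℝ) 1) (hp : 1 < p) (hpq : 1 / p + 1 / q = 1)
    (hconv : SConvexSecondSenseOn s (Set.Icc a b)
      fun x => |deriv (deriv (deriv f)) x| ^ q) :
    |(∫ x in a..b, f x) - (b - a) / 6 * (f a + 4 * f ((a + b) / 2) + f b)| ≤
      (b - a) ^ 4 / 48 * ((1 : ℝ) / 2) ^ (1 / p) *
        (Gamma (2 * p + 1) * Gamma (p + 1) / Gamma (3 * p + 2)) ^ (1 / p) *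
        ((|deriv (deriv (deriv f)) a| ^ q / ((2 : ℝ) ^ (s + 1) * (s + 1)) +
              ((2 : ℝ) ^ (s + 1) - 1) / ((2 : ℝ) ^ (s + 1) * (s + 1)) *
                |deriv (deriv (deriv f)) b| ^ q) ^ (1 / q) +
          (((2 : ℝ) ^ (s + 1) - 1) / ((2 : ℝ) ^ (s + 1) * (s + 1)) *
                |deriv (deriv (deriv f)) a| ^ q +
              |deriv (deriv (deriv f)) b| ^ q / ((2 : ℝ) ^ (s + 1) * (s + 1))) ^ (1 / q)) := by
  have hpq' : p.HolderConjugate q :=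
    Real.holderConjugate_iff.2 ⟨hp, by simpa only [one_div] using hpq⟩
  have hsub : Icc a b ⊆ interior I := hI.interior.out ha hb
  rw [simpson_error_eq hab.le (fun t ht => (hd1 t (hsub ht)).hasDerivAt)
    (fun t ht => (hd2 t (hsub ht)).hasDerivAt) (fun t ht => (hd3 t (hsub ht)).hasDerivAt) hint]
  have hf₃ : Measurable (deriv (deriv (deriv f))) := measurable_deriv _
  have hleft := abs_integral_simpsonKernel_mul_le hab hs.1.le hpq' hf₃ hconv
  have hright := abs_integral_simpsonKernel_mul_le
    (g := fun x => deriv (deriv (deriv f)) (a + b - x)) hab hs.1.le hpq' (by fun_prop)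
    hconv.comp_reflect
  rw [add_sub_cancel_left, add_sub_cancel_right,
    add_comm (_ * |deriv (deriv (deriv f)) b| ^ q)] at hright
  calc _ ≤ _ + _ := abs_sub _ _
    _ ≤ _ := add_le_add hleft hright
    _ = _ := by ring

theorem simpson_sconvex_holder (I : Set ℝ) (hI : I.OrdConnected)
    (hIsub : I ⊆ Set.Ici (0 : ℝ)) (f : ℝ → ℝ) (a b s p q : ℝ)
    (ha : a ∈ interior I) (hb : b ∈ interior I) (hab : a < b)
    (hd1 : ∀ x ∈ interior I, DifferentiableAt ℝ f x)
    (hd2 : ∀ x ∈ interior I, DifferentiableAt ℝ (deriv f) x)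
    (hd3 : ∀ x ∈ interior I, DifferentiableAt ℝ (deriv (deriv f)) x)
    (hint : IntegrableOn (deriv (deriv (deriv f))) (Set.Icc a b))
    (hs : s ∈ Set.Ioc (0 : ℝ) 1) (hq : 1 < q) (hp : 1 < p) (hpq : 1 / p + 1 / q = 1)
    (hconv : SConvexSecondSenseOn s (Set.Icc a b)
      fun x => |deriv (deriv (deriv f)) x| ^ q) :
    |(∫ x in a..b, f x) - (b - a) / 6 * (f a + 4 * f ((a + b) / 2) + f b)| ≤
      (b - a) ^ 4 / 48 * ((1 : ℝ) / 2) ^ (1 / p) *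
        (Gamma (2 * p + 1) * Gamma (p + 1) / Gamma (3 * p + 2)) ^ (1 / p) *
        ((|deriv (deriv (deriv f)) a| ^ q / ((2 : ℝ) ^ (s + 1) * (s + 1)) +
              ((2 : ℝ) ^ (s + 1) - 1) / ((2 : ℝ) ^ (s + 1) * (s + 1)) *
                |deriv (deriv (deriv f)) b| ^ q) ^ (1 / q) +
          (((2 : ℝ) ^ (s + 1) - 1) / ((2 : ℝ) ^ (s + 1) * (s + 1)) *
                |deriv (deriv (deriv f)) a| ^ q +
              |deriv (deriv (deriv f)) b| ^ q / ((2 : ℝ) ^ (s + 1) * (s + 1))) ^ (1 / q)) :=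
  simpson_sconvex_holder_general I hI f a b s p q ha hb hab hd1 hd2 hd3 hint hs hp hpq hconv
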